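/- arXiv:2202.08357 — 9 statements merged into one kernel-verified Lean document; each statement's English description precedes it below -/
import Mathlib

section
/- For any permutation π of {1,...,n} (extended with π₀ = 0 and π_{n+1} = n+1) and any transposition τ(i,j,k) with 1 ≤ i < j < k ≤ n+1, the number of transposition breakpoints changes by at most 3 in absolute value: |b_τ(π) − b_τ(π·τ)| ≤ 3. -/
/-- Extended unsigned permutation of `{1,…,n}`: `p 0 = 0`, `p (n+1) = n+1`,
`p` maps `{1,…,n}` bijectively onto `{1,…,n}`. -/
def IsExtPerm (n : ℕ) (p : ℕ → ℤ) : Prop :=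
  p 0 = 0 ∧ p (n+1) = (n : ℤ) + 1 ∧
  (∀ i, 1 ≤ i → i ≤ n → 1 ≤ p i ∧ p i ≤ (n : ℤ)) ∧
  (∀ i j, 1 ≤ i → i ≤ n → 1 ≤ j → j ≤ n → p i = p j → i = j)

/-- Number of transposition (= signed reversal) breakpoints of the extended
permutation: pairs `(p i, p (i+1))`, `0 ≤ i ≤ n`, with `p (i+1) - p i ≠ 1`. -/
def tBreakpoints (n : ℕ) (p : ℕ → ℤ) : ℕ :=
  ((Finset.range (n+1)).filter (fun i => p (i+1) - p i ≠ 1)).card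

/-- The transposition τ(i,j,k): the result is
`(p₁ … p_{i-1} p_j … p_{k-1} p_i … p_{j-1} p_k … p_n)`. -/
def applyT (p : ℕ → ℤ) (i j k : ℕ) : ℕ → ℤ := fun l =>
  if l < i ∨ k ≤ l then p l
  else if l < i + (k - j) then p (l + (j - i))
  else p (l - (k - j))

/-! `applyT p i j k = p ∘ transIdx i j k`, where the position map `transIdx i j k` is a bijection
of `ℕ` that moves the blocks `[i, j)` and `[j, k)` rigidly. So `transIdx (l + 1) = transIdx l + 1`
except at the three junctions `newCuts i j k` of the new sequence, and `transIdx` matches the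
breakpoints of `applyT p i j k` off `newCuts i j k` with the breakpoints of `p` off the three old
junctions `oldCuts i j k`. The two breakpoint counts therefore differ by at most three. -/

open Finset

theorem abs_card_sub_card_le_of_card_sdiff_eq {α β : Type*} [DecidableEq α] [DecidableEq β]
    {s B : Finset α} {t B' : Finset β} {c : ℕ} (hB : #B ≤ c) (hB' : #B' ≤ c)
    (h : #(s \ B) = #(t \ B')) : |(#s : ℤ) - #t| ≤ c := by
  have hs := card_le_card_sdiff_add_card (s := s) (t := B)
  have ht := card_le_card_sdiff_add_card (s := t) (t := B')
  have hs' := card_le_card (sdiff_subset (s := s) (t := B))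
  have ht' := card_le_card (sdiff_subset (s := t) (t := B'))
  rw [abs_le]
  constructor <;> omega

def transIdx (i j k l : ℕ) : ℕ :=
  if l < i ∨ k ≤ l then l else if l < i + (k - j) then l + (j - i) else l - (k - j)

def transIdxInv (i j k m : ℕ) : ℕ :=
  if m < i ∨ k ≤ m then m else if m < j then m + (k - j) else m - (j - i)

def oldCuts (i j k : ℕ) : Finset ℕ := {i - 1, j - 1, k - 1}

def newCuts (i j k : ℕ) : Finset ℕ := {i - 1, i + (k - j) - 1, k - 1}

section transIdx

variable {i j k : ℕ}

theorem applyT_eq_comp_transIdx (p : ℕ → ℤ) :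
    applyT p i j k = p ∘ transIdx i j k := by
  funext l
  simp only [applyT, transIdx, Function.comp_apply]
  split_ifs <;> rfl

theorem transIdx_transIdxInv (m : ℕ) :
    transIdx i j k (transIdxInv i j k m) = m := by
  unfold transIdx transIdxInv; split_ifs <;> omega

theorem transIdxInv_transIdx (l : ℕ) :
    transIdxInv i j k (transIdx i j k l) = l := by
  unfold transIdx transIdxInv; split_ifs <;> omega

theorem transIdx_lt {l m : ℕ} (hk : k ≤ m) (hl : l < m) : transIdx i j k l < m := by
  unfold transIdx; split_ifs <;> omega

theorem transIdxInv_lt {l m : ℕ} (hk : k ≤ m) (hl : l < m) : transIdxInv i j k l < m := by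
  unfold transIdxInv; split_ifs <;> omega

theorem transIdx_succ {l : ℕ} (hl : l ∉ newCuts i j k) :
    transIdx i j k (l + 1) = transIdx i j k l + 1 := by
  simp only [newCuts, mem_insert, mem_singleton, not_or] at hl
  unfold transIdx; split_ifs <;> omega

theorem transIdx_notMem_oldCuts (hi : 1 ≤ i) (hij : i < j) (hjk : j < k) {l : ℕ}
    (hl : l ∉ newCuts i j k) : transIdx i j k l ∉ oldCuts i j k := by
  simp only [newCuts, oldCuts, mem_insert, mem_singleton, not_or] at hl ⊢
  unfold transIdx; split_ifs <;> omega

theorem transIdxInv_notMem_newCuts (hi : 1 ≤ i) (hij : i < j) {m : ℕ}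
    (hm : m ∉ oldCuts i j k) : transIdxInv i j k m ∉ newCuts i j k := by
  simp only [newCuts, oldCuts, mem_insert, mem_singleton, not_or] at hm ⊢
  unfold transIdxInv; split_ifs <;> omega

end transIdx

def tBreakpointSet (n : ℕ) (p : ℕ → ℤ) : Finset ℕ :=
  (range (n + 1)).filter fun l => p (l + 1) - p l ≠ 1

theorem mem_tBreakpointSet {n l : ℕ} {p : ℕ → ℤ} :
    l ∈ tBreakpointSet n p ↔ l < n + 1 ∧ p (l + 1) - p l ≠ 1 := by
  simp [tBreakpointSet]

theorem card_tBreakpointSet_applyT_sdiff (n : ℕ) (p : ℕ → ℤ) {i j k : ℕ} (hi : 1 ≤ i)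
    (hij : i < j) (hjk : j < k) (hk : k ≤ n + 1) :
    #(tBreakpointSet n (applyT p i j k) \ newCuts i j k) =
      #(tBreakpointSet n p \ oldCuts i j k) := by
  rw [applyT_eq_comp_transIdx]
  refine card_nbij' (transIdx i j k) (transIdxInv i j k) ?_ ?_
    (fun l _ => transIdxInv_transIdx l) (fun m _ => transIdx_transIdxInv m)
  · intro l hl
    simp only [coe_sdiff, Set.mem_sdiff, mem_coe, mem_tBreakpointSet, Function.comp_apply] at hl ⊢
    obtain ⟨⟨hln, hbreak⟩, hcut⟩ := hl
    rw [transIdx_succ hcut] at hbreak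
    exact ⟨⟨transIdx_lt hk hln, hbreak⟩, transIdx_notMem_oldCuts hi hij hjk hcut⟩
  · intro m hm
    simp only [coe_sdiff, Set.mem_sdiff, mem_coe, mem_tBreakpointSet, Function.comp_apply] at hm ⊢
    obtain ⟨⟨hmn, hbreak⟩, hcut⟩ := hm
    have hcut' := transIdxInv_notMem_newCuts hi hij hcut
    rw [transIdx_succ hcut', transIdx_transIdxInv]
    exact ⟨⟨transIdxInv_lt hk hmn, hbreak⟩, hcut'⟩

theorem stmt0_general (n : ℕ) (p : ℕ → ℤ)
    (i j k : ℕ) (hi : 1 ≤ i) (hij : i < j) (hjk : j < k) (hk : k ≤ n + 1) :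
    |(tBreakpoints n p : ℤ) - (tBreakpoints n (applyT p i j k) : ℤ)| ≤ 3 :=
  abs_card_sub_card_le_of_card_sdiff_eq (s := tBreakpointSet n p) card_le_three card_le_three
    (card_tBreakpointSet_applyT_sdiff n p hi hij hjk hk).symm

theorem stmt0 (n : ℕ) (p : ℕ → ℤ) (hp : IsExtPerm n p)
    (i j k : ℕ) (hi : 1 ≤ i) (hij : i < j) (hjk : j < k) (hk : k ≤ n + 1) :
    |(tBreakpoints n p : ℤ) - (tBreakpoints n (applyT p i j k) : ℤ)| ≤ 3 :=
  stmt0_general n p i j k hi hij hjk hk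
end

section
/- For any signed permutation π in which every strip is positive (i.e., every element appearing in a maximal breakpoint-free segment is positive, equivalently all elements of π are positive), any signed reversal ρ̄(i,j) does not decrease the number of signed reversal breakpoints: Δb(π, ρ̄) ≤ 0. -/
/-
Reversing `p_i … p_j` keeps every adjacency strictly inside or outside the segment, up to
re-indexing by the reflection `l ↦ i + j - 1 - l` of `[i, j)`: the pair `(p_l, p_{l+1})` becomes
`(-p_{l+1}, -p_l)`, with the same difference. Only the two boundary adjacencies change, and when
all entries are positive they become `(p_{i-1}, -p_j)` and `(-p_i, p_{j+1})`, whose differences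
are `≤ -1` and `≥ 2`, so both are breakpoints afterwards.
-/

/-- Extended signed permutation of `{1,…,n}`: `p 0 = 0`, `p (n+1) = n+1`,
the absolute values of `p 1, …, p n` are a bijection onto `{1,…,n}`. -/
def IsExtSignedPerm (n : ℕ) (p : ℕ → ℤ) : Prop :=
  p 0 = 0 ∧ p (n+1) = (n : ℤ) + 1 ∧
  (∀ i, 1 ≤ i → i ≤ n → 1 ≤ |p i| ∧ |p i| ≤ (n : ℤ)) ∧
  (∀ i j, 1 ≤ i → i ≤ n → 1 ≤ j → j ≤ n → |p i| = |p j| → i = j)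

/-- The signed reversal ρ̄(i,j): replaces `p_i … p_j` by `-p_j … -p_i`. -/
def applySR (p : ℕ → ℤ) (i j : ℕ) : ℕ → ℤ := fun l =>
  if i ≤ l ∧ l ≤ j then -p (i + j - l) else p l

def reflectIco (i j l : ℕ) : ℕ := if i ≤ l ∧ l < j then i + j - 1 - l else l

theorem reflectIco_involutive (i j : ℕ) : Function.Involutive (reflectIco i j) := by
  intro l
  unfold reflectIco
  split_ifs <;> omega

theorem applySR_of_mem {i j l : ℕ} (p : ℕ → ℤ) (hil : i ≤ l) (hlj : l ≤ j) :
    applySR p i j l = -p (i + j - l) :=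
  if_pos ⟨hil, hlj⟩

theorem applySR_of_not_mem {i j l : ℕ} (p : ℕ → ℤ) (hl : l < i ∨ j < l) :
    applySR p i j l = p l :=
  if_neg (by omega)

theorem applySR_sub_reflectIco {i j l : ℕ} (p : ℕ → ℤ) (hli : l + 1 ≠ i)
    (hlj : l ≠ j) :
    applySR p i j (reflectIco i j l + 1) - applySR p i j (reflectIco i j l) = p (l + 1) - p l := by
  unfold reflectIco
  split_ifs with hl
  · rw [applySR_of_mem p (by omega) (by omega), applySR_of_mem p (by omega) (by omega),
      show i + j - (i + j - 1 - l + 1) = l by omega, show i + j - (i + j - 1 - l) = l + 1 by omega]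
    ring
  · rw [applySR_of_not_mem p (by omega), applySR_of_not_mem p (by omega)]

theorem applySR_sub_left (p : ℕ → ℤ) {i j : ℕ} (hi : 1 ≤ i) (hij : i ≤ j) :
    applySR p i j i - applySR p i j (i - 1) = -p j - p (i - 1) := by
  rw [applySR_of_mem p le_rfl hij, applySR_of_not_mem p (by omega), Nat.add_sub_cancel_left]

theorem applySR_sub_right (p : ℕ → ℤ) {i j : ℕ} (hij : i ≤ j) :
    applySR p i j (j + 1) - applySR p i j j = p (j + 1) + p i := by
  rw [applySR_of_mem p hij le_rfl, applySR_of_not_mem p (by omega), Nat.add_sub_cancel]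
  ring

theorem tBreakpoints_le_applySR {n : ℕ} (p : ℕ → ℤ) {i j : ℕ} (hi : 1 ≤ i) (hij : i ≤ j)
    (hj : j ≤ n) (hleft : -p j - p (i - 1) ≠ 1) (hright : p (j + 1) + p i ≠ 1) :
    tBreakpoints n p ≤ tBreakpoints n (applySR p i j) := by
  refine Finset.card_le_card_of_injOn (reflectIco i j) ?_
    (reflectIco_involutive i j).injective.injOn
  intro l hl
  simp only [Finset.coe_filter, Finset.mem_range, Set.mem_ofPred_eq] at hl ⊢
  obtain ⟨hln, hbp⟩ := hl
  have hrange : reflectIco i j l < n + 1 := by unfold reflectIco; split_ifs <;> omega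
  refine ⟨hrange, ?_⟩
  by_cases hli : l + 1 = i
  · have hfix : reflectIco i j l = l := if_neg (by omega)
    rw [hfix, hli, show l = i - 1 by omega, applySR_sub_left p hi hij]
    exact hleft
  by_cases hlj : l = j
  · have hfix : reflectIco i j l = l := if_neg (by omega)
    rw [hfix, hlj, applySR_sub_right p hij]
    exact hright
  rw [applySR_sub_reflectIco p hli hlj]
  exact hbp

theorem stmt4 (n : ℕ) (p : ℕ → ℤ) (hp : IsExtSignedPerm n p)
    (hpos : ∀ i, 1 ≤ i → i ≤ n → 0 < p i)
    (i j : ℕ) (hi : 1 ≤ i) (hij : i ≤ j) (hj : j ≤ n) :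
    (tBreakpoints n p : ℤ) - (tBreakpoints n (applySR p i j) : ℤ) ≤ 0 := by
  obtain ⟨h0, hn1, -, -⟩ := hp
  have hpos_ext : ∀ k, 1 ≤ k → k ≤ n + 1 → 0 < p k := by
    intro k hk1 hk2
    rcases Nat.lt_or_ge k (n + 1) with hk | hk
    · exact hpos k hk1 (by omega)
    · rw [show k = n + 1 by omega, hn1]; omega
  have hleft : 0 ≤ p (i - 1) := by
    rcases Nat.eq_zero_or_pos (i - 1) with hz | hz
    · rw [hz, h0]
    · exact (hpos_ext _ hz (by omega)).le
  have hpi := hpos_ext i hi (by omega)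
  have hpj := hpos_ext j (by omega) (by omega)
  have hpj1 := hpos_ext (j + 1) (by omega) (by omega)
  have := tBreakpoints_le_applySR p hi hij hj (by omega) (by omega)
  omega
end

section
/- For any signed permutation π whose elements are all positive and any transreversal (of type 1 or type 2), the number of signed reversal breakpoints decreases by at most 1: Δb(π, ρτ̄) ≤ 1. -/
/-- Signed transreversal type 1 ρτ̄₁(i,j,k): result is
`(p₁ … p_{i-1} p_j … p_{k-1} -p_{j-1} … -p_i p_k … p_n)`. -/
def applySTR1 (p : ℕ → ℤ) (i j k : ℕ) : ℕ → ℤ := fun l =>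
  if l < i ∨ k ≤ l then p l
  else if l < i + (k - j) then p (l + (j - i))
  else -p (i + k - 1 - l)

/-- Signed transreversal type 2 ρτ̄₂(i,j,k): result is
`(p₁ … p_{i-1} -p_{k-1} … -p_j p_i … p_{j-1} p_k … p_n)`. -/
def applySTR2 (p : ℕ → ℤ) (i j k : ℕ) : ℕ → ℤ := fun l =>
  if l < i ∨ k ≤ l then p l
  else if l < i + (k - j) then -p (i + k - 1 - l)
  else p (l - (k - j))

lemma STR1_out (p : ℕ → ℤ) (i j k l : ℕ) (h : l < i ∨ k ≤ l) :
    applySTR1 p i j k l = p l := by simp only [applySTR1]; rw [if_pos h]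

lemma STR1_mid (p : ℕ → ℤ) (i j k l : ℕ) (h1 : ¬(l < i ∨ k ≤ l)) (h2 : l < i + (k - j)) :
    applySTR1 p i j k l = p (l + (j - i)) := by
  simp only [applySTR1]; rw [if_neg h1, if_pos h2]

lemma STR1_rev (p : ℕ → ℤ) (i j k l : ℕ) (h1 : ¬(l < i ∨ k ≤ l)) (h2 : ¬ l < i + (k - j)) :
    applySTR1 p i j k l = -p (i + k - 1 - l) := by
  simp only [applySTR1]; rw [if_neg h1, if_neg h2]

lemma STR2_out (p : ℕ → ℤ) (i j k l : ℕ) (h : l < i ∨ k ≤ l) :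
    applySTR2 p i j k l = p l := by simp only [applySTR2]; rw [if_pos h]

lemma STR2_rev (p : ℕ → ℤ) (i j k l : ℕ) (h1 : ¬(l < i ∨ k ≤ l)) (h2 : l < i + (k - j)) :
    applySTR2 p i j k l = -p (i + k - 1 - l) := by
  simp only [applySTR2]; rw [if_neg h1, if_pos h2]

lemma STR2_mid (p : ℕ → ℤ) (i j k l : ℕ) (h1 : ¬(l < i ∨ k ≤ l)) (h2 : ¬ l < i + (k - j)) :
    applySTR2 p i j k l = p (l - (k - j)) := by
  simp only [applySTR2]; rw [if_neg h1, if_neg h2]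

def tau1 (i j k m : ℕ) : ℕ :=
  if m < i ∨ k ≤ m then m else if m < j then i + k - 2 - m else m - (j - i)

def tau2 (i j k m : ℕ) : ℕ :=
  if m < i ∨ k ≤ m then m else if m < j then m + (k - j) else i + k - 2 - m

lemma count_aux (s t : Finset ℕ) (τ : ℕ → ℕ) (a b c u v : ℕ)
    (huv : u ≠ v) (hu : u ∈ t) (hv : v ∈ t)
    (hmap : ∀ m ∈ s \ {a, b, c}, τ m ∈ t \ {u, v})
    (hinj : ∀ m₁ ∈ s \ {a, b, c}, ∀ m₂ ∈ s \ {a, b, c}, τ m₁ = τ m₂ → m₁ = m₂) :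
    (s.card : ℤ) - t.card ≤ 1 := by
  have h1 : (s \ {a, b, c}).card ≤ (t \ {u, v}).card :=
    Finset.card_le_card_of_injOn τ hmap hinj
  have h2 : s.card ≤ (s \ {a, b, c}).card + ({a, b, c} : Finset ℕ).card :=
    Finset.card_le_card_sdiff_add_card
  have h2' : ({a, b, c} : Finset ℕ).card ≤ 3 := by
    have := Finset.card_insert_le a ({b, c} : Finset ℕ)
    have := Finset.card_insert_le b ({c} : Finset ℕ)
    simp at *; omega
  have h3 : ({u, v} : Finset ℕ) ⊆ t := by
    intro x hx; simp at hx; rcases hx with rfl | rfl <;> assumption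
  have h4 : (t \ {u, v}).card = t.card - ({u, v} : Finset ℕ).card := Finset.card_sdiff_of_subset h3
  have h5 : ({u, v} : Finset ℕ).card = 2 := by simp [huv]
  have h6 : ({u, v} : Finset ℕ).card ≤ t.card := Finset.card_le_card h3
  omega

lemma diff1 (p : ℕ → ℤ) (i j k m : ℕ) (hi : 1 ≤ i) (hij : i < j) (hjk : j < k)
    (h1 : m ≠ i - 1) (h2 : m ≠ j - 1) (h3 : m ≠ k - 1) :
    applySTR1 p i j k (tau1 i j k m + 1) - applySTR1 p i j k (tau1 i j k m)
      = p (m + 1) - p m := by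
  rcases (show m + 1 < i ∨ (i ≤ m ∧ m + 1 < j) ∨ (j ≤ m ∧ m + 1 < k) ∨ k ≤ m by omega)
    with h | ⟨ha, hb⟩ | ⟨ha, hb⟩ | h
  · have ht : tau1 i j k m = m := by simp only [tau1]; rw [if_pos (by omega)]
    rw [ht, STR1_out _ _ _ _ _ (by omega), STR1_out _ _ _ _ _ (by omega)]
  · have ht : tau1 i j k m = i + k - 2 - m := by
      simp only [tau1]; rw [if_neg (by omega), if_pos (by omega)]
    rw [ht, STR1_rev _ _ _ _ _ (by omega) (by omega),
        STR1_rev _ _ _ _ _ (by omega) (by omega)]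
    have e1 : i + k - 1 - (i + k - 2 - m + 1) = m := by omega
    have e2 : i + k - 1 - (i + k - 2 - m) = m + 1 := by omega
    rw [e1, e2]; ring
  · have ht : tau1 i j k m = m - (j - i) := by
      simp only [tau1]; rw [if_neg (by omega), if_neg (by omega)]
    rw [ht, STR1_mid _ _ _ _ _ (by omega) (by omega),
        STR1_mid _ _ _ _ _ (by omega) (by omega)]
    have e1 : m - (j - i) + 1 + (j - i) = m + 1 := by omega
    have e2 : m - (j - i) + (j - i) = m := by omega
    rw [e1, e2]
  · have ht : tau1 i j k m = m := by simp only [tau1]; rw [if_pos (by omega)]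
    rw [ht, STR1_out _ _ _ _ _ (by omega), STR1_out _ _ _ _ _ (by omega)]

lemma diff2 (p : ℕ → ℤ) (i j k m : ℕ) (hi : 1 ≤ i) (hij : i < j) (hjk : j < k)
    (h1 : m ≠ i - 1) (h2 : m ≠ j - 1) (h3 : m ≠ k - 1) :
    applySTR2 p i j k (tau2 i j k m + 1) - applySTR2 p i j k (tau2 i j k m)
      = p (m + 1) - p m := by
  rcases (show m + 1 < i ∨ (i ≤ m ∧ m + 1 < j) ∨ (j ≤ m ∧ m + 1 < k) ∨ k ≤ m by omega)
    with h | ⟨ha, hb⟩ | ⟨ha, hb⟩ | h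
  · have ht : tau2 i j k m = m := by simp only [tau2]; rw [if_pos (by omega)]
    rw [ht, STR2_out _ _ _ _ _ (by omega), STR2_out _ _ _ _ _ (by omega)]
  · have ht : tau2 i j k m = m + (k - j) := by
      simp only [tau2]; rw [if_neg (by omega), if_pos (by omega)]
    rw [ht, STR2_mid _ _ _ _ _ (by omega) (by omega),
        STR2_mid _ _ _ _ _ (by omega) (by omega)]
    have e1 : m + (k - j) + 1 - (k - j) = m + 1 := by omega
    have e2 : m + (k - j) - (k - j) = m := by omega
    rw [e1, e2]
  · have ht : tau2 i j k m = i + k - 2 - m := by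
      simp only [tau2]; rw [if_neg (by omega), if_neg (by omega)]
    rw [ht, STR2_rev _ _ _ _ _ (by omega) (by omega),
        STR2_rev _ _ _ _ _ (by omega) (by omega)]
    have e1 : i + k - 1 - (i + k - 2 - m + 1) = m := by omega
    have e2 : i + k - 1 - (i + k - 2 - m) = m + 1 := by omega
    rw [e1, e2]; ring
  · have ht : tau2 i j k m = m := by simp only [tau2]; rw [if_pos (by omega)]
    rw [ht, STR2_out _ _ _ _ _ (by omega), STR2_out _ _ _ _ _ (by omega)]

theorem stmt5 (n : ℕ) (p : ℕ → ℤ) (hp : IsExtSignedPerm n p)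
    (hpos : ∀ i, 1 ≤ i → i ≤ n → 0 < p i)
    (i j k : ℕ) (hi : 1 ≤ i) (hij : i < j) (hjk : j < k) (hk : k ≤ n + 1) :
    (tBreakpoints n p : ℤ) - (tBreakpoints n (applySTR1 p i j k) : ℤ) ≤ 1 ∧
    (tBreakpoints n p : ℤ) - (tBreakpoints n (applySTR2 p i j k) : ℤ) ≤ 1 := by
  obtain ⟨h0, hn1, _, _⟩ := hp
  have pk1 : 1 ≤ p (k - 1) := hpos _ (by omega) (by omega)
  have pj1 : 1 ≤ p (j - 1) := hpos _ (by omega) (by omega)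
  have pii : 1 ≤ p i := hpos _ hi (by omega)
  have pjj : 1 ≤ p j := hpos _ (by omega) (by omega)
  have pkk : 1 ≤ p k := by
    rcases Nat.lt_or_ge k (n + 1) with h | h
    · exact hpos _ (by omega) (by omega)
    · have : k = n + 1 := by omega
      rw [this, hn1]; omega
  have pim1 : 0 ≤ p (i - 1) := by
    rcases Nat.lt_or_ge 1 i with h | h
    · exact le_of_lt (hpos _ (by omega) (by omega))
    · have : i - 1 = 0 := by omega
      rw [this, h0]
  constructor
  · -- type 1
    unfold tBreakpoints
    apply count_aux _ _ (tau1 i j k) (i - 1) (j - 1) (k - 1) (i + (k - j) - 1) (k - 1)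
      (by omega)
    · -- junction is a breakpoint
      simp only [Finset.mem_filter, Finset.mem_range]
      refine ⟨by omega, ?_⟩
      rw [show i + (k - j) - 1 + 1 = i + (k - j) by omega,
          STR1_rev _ _ _ _ _ (by omega) (by omega),
          STR1_mid _ _ _ _ _ (by omega) (by omega),
          show i + k - 1 - (i + (k - j)) = j - 1 by omega,
          show i + (k - j) - 1 + (j - i) = k - 1 by omega]
      intro hcon; omega
    · -- right boundary is a breakpoint
      simp only [Finset.mem_filter, Finset.mem_range]
      refine ⟨by omega, ?_⟩
      rw [show k - 1 + 1 = k by omega, STR1_out _ _ _ _ _ (by omega),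
          STR1_rev _ _ _ _ _ (by omega) (by omega),
          show i + k - 1 - (k - 1) = i by omega]
      intro hcon; omega
    · intro m hm
      simp only [Finset.mem_sdiff, Finset.mem_insert, Finset.mem_singleton,
        Finset.mem_filter, Finset.mem_range] at hm ⊢
      obtain ⟨⟨hmr, hbp⟩, hne⟩ := hm
      push_neg at hne
      obtain ⟨ha, hb, hc⟩ := hne
      refine ⟨⟨?_, ?_⟩, ?_⟩
      · have : tau1 i j k m ≤ n := by
          simp only [tau1]; split_ifs <;> omega
        omega
      · rw [diff1 p i j k m hi hij hjk ha hb hc]; exact hbp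
      · have : tau1 i j k m ≠ i + (k - j) - 1 ∧ tau1 i j k m ≠ k - 1 := by
          simp only [tau1]; split_ifs <;> constructor <;> omega
        push_neg
        exact this
    · intro m₁ hm₁ m₂ hm₂ h
      simp only [Finset.mem_sdiff, Finset.mem_insert, Finset.mem_singleton,
        Finset.mem_filter, Finset.mem_range] at hm₁ hm₂
      obtain ⟨⟨hr1, -⟩, hne1⟩ := hm₁
      obtain ⟨⟨hr2, -⟩, hne2⟩ := hm₂
      push_neg at hne1 hne2
      simp only [tau1] at h
      split_ifs at h <;> omega
  · -- type 2
    unfold tBreakpoints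
    apply count_aux _ _ (tau2 i j k) (i - 1) (j - 1) (k - 1) (i - 1) (i + (k - j) - 1)
      (by omega)
    · -- left boundary is a breakpoint
      simp only [Finset.mem_filter, Finset.mem_range]
      refine ⟨by omega, ?_⟩
      rw [show i - 1 + 1 = i by omega, STR2_rev _ _ _ _ _ (by omega) (by omega),
          STR2_out _ _ _ _ _ (by omega),
          show i + k - 1 - i = k - 1 by omega]
      intro hcon; omega
    · -- junction is a breakpoint
      simp only [Finset.mem_filter, Finset.mem_range]
      refine ⟨by omega, ?_⟩
      rw [show i + (k - j) - 1 + 1 = i + (k - j) by omega,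
          STR2_mid _ _ _ _ _ (by omega) (by omega),
          STR2_rev _ _ _ _ _ (by omega) (by omega),
          show i + (k - j) - (k - j) = i by omega,
          show i + k - 1 - (i + (k - j) - 1) = j by omega]
      intro hcon; omega
    · intro m hm
      simp only [Finset.mem_sdiff, Finset.mem_insert, Finset.mem_singleton,
        Finset.mem_filter, Finset.mem_range] at hm ⊢
      obtain ⟨⟨hmr, hbp⟩, hne⟩ := hm
      push_neg at hne
      obtain ⟨ha, hb, hc⟩ := hne
      refine ⟨⟨?_, ?_⟩, ?_⟩
      · have : tau2 i j k m ≤ n := by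
          simp only [tau2]; split_ifs <;> omega
        omega
      · rw [diff2 p i j k m hi hij hjk ha hb hc]; exact hbp
      · have : tau2 i j k m ≠ i - 1 ∧ tau2 i j k m ≠ i + (k - j) - 1 := by
          simp only [tau2]; split_ifs <;> constructor <;> omega
        push_neg
        exact this
    · intro m₁ hm₁ m₂ hm₂ h
      simp only [Finset.mem_sdiff, Finset.mem_insert, Finset.mem_singleton,
        Finset.mem_filter, Finset.mem_range] at hm₁ hm₂
      obtain ⟨⟨hr1, -⟩, hne1⟩ := hm₁
      obtain ⟨⟨hr2, -⟩, hne2⟩ := hm₂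
      push_neg at hne1 hne2
      simp only [tau2] at h
      split_ifs at h <;> omega
end

section
/- For any signed permutation π whose elements are all positive and any revrev ρρ̄(i,j,k), the number of signed reversal breakpoints decreases by at most 1: Δb(π, ρρ̄) ≤ 1. -/
/-- Signed revrev ρρ̄(i,j,k): result is
`(p₁ … p_{i-1} -p_{j-1} … -p_i -p_{k-1} … -p_j p_k … p_n)`. -/
def applySRR (p : ℕ → ℤ) (i j k : ℕ) : ℕ → ℤ := fun l =>
  if l < i ∨ k ≤ l then p l
  else if l < j then -p (i + j - 1 - l)
  else -p (j + k - 1 - l)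

theorem stmt6 (n : ℕ) (p : ℕ → ℤ) (hp : IsExtSignedPerm n p)
    (hpos : ∀ i, 1 ≤ i → i ≤ n → 0 < p i)
    (i j k : ℕ) (hi : 1 ≤ i) (hij : i < j) (hjk : j < k) (hk : k ≤ n + 1) :
    (tBreakpoints n p : ℤ) - (tBreakpoints n (applySRR p i j k) : ℤ) ≤ 1 := by
  obtain ⟨h0, hn1, -, -⟩ := hp
  set q := applySRR p i j k with hqdef
  have qA : ∀ l, l < i ∨ k ≤ l → q l = p l := by
    intro l hl; simp only [hqdef, applySRR, if_pos hl]
  have qB : ∀ l, i ≤ l → l < j → q l = -p (i + j - 1 - l) := by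
    intro l h1 h2
    have h3 : ¬(l < i ∨ k ≤ l) := by omega
    simp only [hqdef, applySRR, if_neg h3, if_pos h2]
  have qC : ∀ l, j ≤ l → l < k → q l = -p (j + k - 1 - l) := by
    intro l h1 h2
    have h3 : ¬(l < i ∨ k ≤ l) := by omega
    have h4 : ¬ l < j := by omega
    simp only [hqdef, applySRR, if_neg h3, if_neg h4]
  have hpnn : ∀ m, m ≤ n → 0 ≤ p m := by
    intro m hm
    rcases Nat.eq_zero_or_pos m with h | h
    · subst h; simp [h0]
    · exact le_of_lt (hpos m h hm)
  have hpk : 1 ≤ p k := by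
    rcases eq_or_lt_of_le hk with h | h
    · rw [h, hn1]; have : (0:ℤ) ≤ (n:ℤ) := Nat.cast_nonneg n; omega
    · exact hpos k (by omega) (by omega)
  set f : ℕ → ℕ := fun l =>
    if l < i then l else if l + 2 ≤ j then i + j - 2 - l
    else if l + 2 ≤ k then j + k - 2 - l else l with hfdef
  -- key property of f on the complement of {i-1, j-1, k-1}
  have fprop : ∀ l, l ≤ n → l ≠ i-1 → l ≠ j-1 → l ≠ k-1 →
      f l ≤ n ∧ f l ≠ i-1 ∧ f l ≠ j-1 ∧ f l ≠ k-1 ∧ f (f l) = l ∧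
      q (l+1) - q l = p (f l + 1) - p (f l) := by
    intro l hl h1 h2 h3
    by_cases c1 : l < i
    · have hf : f l = l := if_pos c1
      have e1 : q l = p l := qA l (Or.inl c1)
      have e2 : q (l+1) = p (l+1) := qA (l+1) (Or.inl (by omega))
      refine ⟨by omega, by rw [hf]; exact h1, by rw [hf]; omega, by rw [hf]; omega,
        by rw [hf, hf], by rw [e1, e2, hf]⟩
    · by_cases c2 : l + 2 ≤ j
      · have hf : f l = i + j - 2 - l := by
          simp only [hfdef]; rw [if_neg c1, if_pos c2]
        have hfl1 : i ≤ f l ∧ f l + 2 ≤ j := by omega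
        have hql : q l = -p (i+j-1-l) := qB l (by omega) (by omega)
        have hql1 : q (l+1) = -p (i+j-2-l) := by
          rw [qB (l+1) (by omega) (by omega), show i+j-1-(l+1) = i+j-2-l by omega]
        have hff : f (f l) = l := by
          rw [hf]
          simp only [hfdef]
          rw [if_neg (by omega : ¬ (i+j-2-l < i)), if_pos (by omega : (i+j-2-l) + 2 ≤ j)]
          omega
        refine ⟨by omega, by omega, by omega, by omega, hff, ?_⟩
        rw [hql, hql1, hf, show i+j-2-l+1 = i+j-1-l by omega]; ring
      · by_cases c3 : l + 2 ≤ k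
        · have hf : f l = j + k - 2 - l := by
            simp only [hfdef]; rw [if_neg c1, if_neg c2, if_pos c3]
          have hfl1 : j ≤ f l ∧ f l + 2 ≤ k := by omega
          have hql : q l = -p (j+k-1-l) := qC l (by omega) (by omega)
          have hql1 : q (l+1) = -p (j+k-2-l) := by
            rw [qC (l+1) (by omega) (by omega), show j+k-1-(l+1) = j+k-2-l by omega]
          have hff : f (f l) = l := by
            rw [hf]
            simp only [hfdef]
            rw [if_neg (by omega : ¬ (j+k-2-l < i)), if_neg (by omega : ¬ (j+k-2-l) + 2 ≤ j),
              if_pos (by omega : (j+k-2-l) + 2 ≤ k)]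
            omega
          refine ⟨by omega, by omega, by omega, by omega, hff, ?_⟩
          rw [hql, hql1, hf, show j+k-2-l+1 = j+k-1-l by omega]; ring
        · have hf : f l = l := by
            simp only [hfdef]; rw [if_neg c1, if_neg c2, if_neg c3]
          have hkl : k ≤ l := by omega
          have e1 : q l = p l := qA l (Or.inr hkl)
          have e2 : q (l+1) = p (l+1) := qA (l+1) (Or.inr (by omega))
          refine ⟨by omega, by rw [hf]; omega, by rw [hf]; omega, by rw [hf]; exact h3,
            by rw [hf, hf], by rw [e1, e2, hf]⟩
  set S : Finset ℕ := {i-1, j-1, k-1} with hS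
  set Bp := (Finset.range (n+1)).filter (fun l => p (l+1) - p l ≠ 1) with hBp
  set Bq := (Finset.range (n+1)).filter (fun l => q (l+1) - q l ≠ 1) with hBq
  have memS : ∀ x, x ∈ S ↔ (x = i-1 ∨ x = j-1 ∨ x = k-1) := by
    intro x; simp [hS]
  -- i-1 and k-1 are breakpoints of q
  have mem1 : i - 1 ∈ Bq := by
    have e : i - 1 + 1 = i := by omega
    have hqi : q i = -p (j-1) := by
      rw [qB i le_rfl hij, show i+j-1-i = j-1 by omega]
    have hqi1 : q (i-1) = p (i-1) := qA (i-1) (Or.inl (by omega))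
    have hj1 : (1:ℤ) ≤ p (j-1) := hpos (j-1) (by omega) (by omega)
    have hi1 : (0:ℤ) ≤ p (i-1) := hpnn (i-1) (by omega)
    simp only [hBq, Finset.mem_filter, Finset.mem_range]
    refine ⟨by omega, ?_⟩
    rw [e, hqi, hqi1]
    omega
  have mem2 : k - 1 ∈ Bq := by
    have e : k - 1 + 1 = k := by omega
    have hqk1 : q (k-1) = -p j := by
      rw [qC (k-1) (by omega) (by omega), show j+k-1-(k-1) = j by omega]
    have hqk : q k = p k := qA k (Or.inr le_rfl)
    have hj1 : (1:ℤ) ≤ p j := hpos j (by omega) (by omega)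
    simp only [hBq, Finset.mem_filter, Finset.mem_range]
    refine ⟨by omega, ?_⟩
    rw [e, hqk, hqk1]
    omega
  -- the bijection on the rest
  have card_eq : (Bp \ S).card = (Bq \ S).card := by
    apply Finset.card_bij' (fun a _ => f a) (fun a _ => f a)
    · intro a ha
      simp only [Finset.mem_sdiff, hBp, hBq, Finset.mem_filter, Finset.mem_range, memS] at ha ⊢
      obtain ⟨⟨har, hab⟩, hans⟩ := ha
      obtain ⟨hf1, hf2, hf3, hf4, hf5, _⟩ := fprop a (by omega) (by tauto) (by tauto) (by tauto)
      obtain ⟨_, _, _, _, _, hd⟩ := fprop (f a) hf1 hf2 hf3 hf4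
      rw [hf5] at hd
      exact ⟨⟨by omega, by rw [hd]; exact hab⟩, by tauto⟩
    · intro a ha
      simp only [Finset.mem_sdiff, hBp, hBq, Finset.mem_filter, Finset.mem_range, memS] at ha ⊢
      obtain ⟨⟨har, hab⟩, hans⟩ := ha
      obtain ⟨hf1, hf2, hf3, hf4, _, hd⟩ := fprop a (by omega) (by tauto) (by tauto) (by tauto)
      rw [hd] at hab
      exact ⟨⟨by omega, hab⟩, by tauto⟩
    · intro a ha
      simp only [Finset.mem_sdiff, hBp, Finset.mem_filter, Finset.mem_range, memS] at ha
      exact (fprop a (by omega) (by tauto) (by tauto) (by tauto)).2.2.2.2.1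
    · intro a ha
      simp only [Finset.mem_sdiff, hBq, Finset.mem_filter, Finset.mem_range, memS] at ha
      exact (fprop a (by omega) (by tauto) (by tauto) (by tauto)).2.2.2.2.1
  -- counting
  have hScard : S.card ≤ 3 := by
    refine le_trans (Finset.card_insert_le _ _) ?_
    have := Finset.card_insert_le (j-1) ({k-1} : Finset ℕ)
    simp at this ⊢
    omega
  have h1 : Bp.card ≤ (Bp \ S).card + 3 := by
    have hsub : Bp ⊆ (Bp \ S) ∪ S := by
      intro x hx
      rw [Finset.mem_union, Finset.mem_sdiff]
      by_cases hxS : x ∈ S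
      · exact Or.inr hxS
      · exact Or.inl ⟨hx, hxS⟩
    calc Bp.card ≤ ((Bp \ S) ∪ S).card := Finset.card_le_card hsub
      _ ≤ (Bp \ S).card + S.card := Finset.card_union_le _ _
      _ ≤ (Bp \ S).card + 3 := by omega
  have h2 : (Bq \ S).card + 2 ≤ Bq.card := by
    have hT : ({i-1, k-1} : Finset ℕ).card = 2 := by
      rw [Finset.card_insert_of_notMem (by simp; omega), Finset.card_singleton]
    have hdisj : Disjoint (Bq \ S) ({i-1, k-1} : Finset ℕ) := by
      rw [Finset.disjoint_right]
      intro x hx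
      simp only [Finset.mem_insert, Finset.mem_singleton] at hx
      simp only [Finset.mem_sdiff, memS]
      tauto
    have hsub : (Bq \ S) ∪ ({i-1, k-1} : Finset ℕ) ⊆ Bq := by
      intro x hx
      rcases Finset.mem_union.1 hx with h | h
      · exact (Finset.mem_sdiff.1 h).1
      · simp only [Finset.mem_insert, Finset.mem_singleton] at h
        rcases h with h | h <;> subst h <;> assumption
    calc (Bq \ S).card + 2 = ((Bq \ S) ∪ ({i-1, k-1} : Finset ℕ)).card := by
          rw [Finset.card_union_of_disjoint hdisj, hT]
      _ ≤ Bq.card := Finset.card_le_card hsub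
  have hp' : tBreakpoints n p = Bp.card := rfl
  have hq' : tBreakpoints n q = Bq.card := rfl
  rw [hp', hq']
  omega
end

section
/- Let w₁, w₂ > 0 be the weights of reversals and of transpositions/transreversals/revrevs respectively. For any signed permutation π, any sorting sequence of such operations has total weight at least min{w₁/2, w₂/3} · b(π), where b(π) is the number of signed reversal breakpoints of π. -/
/-- A rearrangement operation on signed permutations: reversal, transposition,
transreversal (type 1 or 2), or revrev. -/
inductive SOp where
  | rev (i j : ℕ)
  | transp (i j k : ℕ)
  | transrev1 (i j k : ℕ)
  | transrev2 (i j k : ℕ)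
  | revrev (i j k : ℕ)

/-- Validity of the indices of an operation on a permutation of size `n`. -/
def SOp.Valid (n : ℕ) : SOp → Prop
  | .rev i j => 1 ≤ i ∧ i ≤ j ∧ j ≤ n
  | .transp i j k => 1 ≤ i ∧ i < j ∧ j < k ∧ k ≤ n + 1
  | .transrev1 i j k => 1 ≤ i ∧ i < j ∧ j < k ∧ k ≤ n + 1
  | .transrev2 i j k => 1 ≤ i ∧ i < j ∧ j < k ∧ k ≤ n + 1
  | .revrev i j k => 1 ≤ i ∧ i < j ∧ j < k ∧ k ≤ n + 1

/-- Applying an operation to a signed permutation. -/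
def SOp.apply : SOp → (ℕ → ℤ) → (ℕ → ℤ)
  | .rev i j, p => applySR p i j
  | .transp i j k, p => applyT p i j k
  | .transrev1 i j k, p => applySTR1 p i j k
  | .transrev2 i j k, p => applySTR2 p i j k
  | .revrev i j k, p => applySRR p i j k

/-- Weight of an operation: `w₁` for reversals, `w₂` for transpositions,
transreversals, and revrevs. -/
def SOp.weight (w₁ w₂ : ℝ) : SOp → ℝ
  | .rev _ _ => w₁
  | _ => w₂


private lemma keyInj (n : ℕ) (p q : ℕ → ℤ) (A : Finset ℕ) (φ : ℕ → ℕ)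
    (hmap : ∀ l, l ≤ n → l ∉ A → φ l ≤ n)
    (hinj : ∀ a b, a ≤ n → a ∉ A → b ≤ n → b ∉ A → φ a = φ b → a = b)
    (heq : ∀ l, l ≤ n → l ∉ A → q (φ l + 1) - q (φ l) = p (l+1) - p l) :
    tBreakpoints n p ≤ tBreakpoints n q + A.card := by
  unfold tBreakpoints
  have h1 : ((Finset.range (n+1)).filter (fun i => p (i+1) - p i ≠ 1)).card ≤
      (((Finset.range (n+1)).filter (fun i => p (i+1) - p i ≠ 1)) \ A).card + A.card :=
    Finset.card_le_card_sdiff_add_card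
  refine h1.trans (Nat.add_le_add_right ?_ _)
  apply Finset.card_le_card_of_injOn φ
  · intro l hl
    simp only [Finset.mem_coe, Finset.mem_sdiff, Finset.mem_filter, Finset.mem_range] at hl ⊢
    obtain ⟨⟨hl1, hl2⟩, hl3⟩ := hl
    have hln : l ≤ n := by omega
    refine ⟨by have := hmap l hln hl3; omega, ?_⟩
    rw [heq l hln hl3]; exact hl2
  · intro a ha b hb hab
    simp only [Finset.coe_sdiff, Set.mem_diff, Finset.mem_coe, Finset.mem_filter,
      Finset.mem_range] at ha hb
    exact hinj a b (by omega) ha.2 (by omega) hb.2 hab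

private lemma card3' (a b c : ℕ) : ({a, b, c} : Finset ℕ).card ≤ 3 :=
  (Finset.card_insert_le _ _).trans (by
    have := Finset.card_insert_le b ({c} : Finset ℕ); simp at this ⊢; omega)

private lemma rev_bound (n i j : ℕ) (p : ℕ → ℤ) (h1 : 1 ≤ i) (h2 : i ≤ j) (h3 : j ≤ n) :
    tBreakpoints n p ≤ tBreakpoints n (applySR p i j) + 2 := by
  have hk := keyInj n p (applySR p i j) {i-1, j}
      (fun l => if i ≤ l ∧ l < j then i+j-1-l else l) ?_ ?_ ?_
  · have hc : ({i-1, j} : Finset ℕ).card ≤ 2 :=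
      (Finset.card_insert_le _ _).trans (by simp)
    omega
  · intro l hl hA; split_ifs with h <;> omega
  · intro a b ha hA hb hB hab
    simp only [Finset.mem_insert, Finset.mem_singleton, not_or] at hA hB
    split_ifs at hab <;> omega
  · intro l hl hA
    simp only [Finset.mem_insert, Finset.mem_singleton, not_or] at hA
    by_cases h : i ≤ l ∧ l < j
    · rw [if_pos h]
      have e1 : applySR p i j (i+j-1-l+1) = -p l := by
        have hx : i + j - (i+j-1-l+1) = l := by omega
        unfold applySR; rw [if_pos (by omega), hx]
      have e2 : applySR p i j (i+j-1-l) = -p (l+1) := by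
        have hx : i + j - (i+j-1-l) = l+1 := by omega
        unfold applySR; rw [if_pos (by omega), hx]
      rw [e1, e2]; ring
    · rw [if_neg h]
      have e1 : applySR p i j (l+1) = p (l+1) := by
        unfold applySR; rw [if_neg (by omega)]
      have e2 : applySR p i j l = p l := by
        unfold applySR; rw [if_neg (by omega)]
      rw [e1, e2]

private lemma transp_bound (n i j k : ℕ) (p : ℕ → ℤ) (h1 : 1 ≤ i) (h2 : i < j) (h3 : j < k)
    (h4 : k ≤ n + 1) :
    tBreakpoints n p ≤ tBreakpoints n (applyT p i j k) + 3 := by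
  have hk := keyInj n p (applyT p i j k) {i-1, j-1, k-1}
      (fun l => if i ≤ l ∧ l + 1 < j then l + (k-j)
        else if j ≤ l ∧ l + 1 < k then l - (j-i) else l) ?_ ?_ ?_
  · have := card3' (i-1) (j-1) (k-1); omega
  · intro l hl hA
    simp only [Finset.mem_insert, Finset.mem_singleton, not_or] at hA
    split_ifs with h h' <;> omega
  · intro a b ha hA hb hB hab
    simp only [Finset.mem_insert, Finset.mem_singleton, not_or] at hA hB
    split_ifs at hab <;> omega
  · intro l hl hA
    simp only [Finset.mem_insert, Finset.mem_singleton, not_or] at hA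
    by_cases h : i ≤ l ∧ l + 1 < j
    · rw [if_pos h]
      have e1 : applyT p i j k (l+(k-j)+1) = p (l+1) := by
        have hx : l+(k-j)+1 - (k-j) = l+1 := by omega
        unfold applyT; rw [if_neg (by omega), if_neg (by omega), hx]
      have e2 : applyT p i j k (l+(k-j)) = p l := by
        have hx : l+(k-j) - (k-j) = l := by omega
        unfold applyT; rw [if_neg (by omega), if_neg (by omega), hx]
      rw [e1, e2]
    · rw [if_neg h]
      by_cases h' : j ≤ l ∧ l + 1 < k
      · rw [if_pos h']
        have e1 : applyT p i j k (l-(j-i)+1) = p (l+1) := by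
          have hx : l-(j-i)+1 + (j-i) = l+1 := by omega
          unfold applyT; rw [if_neg (by omega), if_pos (by omega), hx]
        have e2 : applyT p i j k (l-(j-i)) = p l := by
          have hx : l-(j-i) + (j-i) = l := by omega
          unfold applyT; rw [if_neg (by omega), if_pos (by omega), hx]
        rw [e1, e2]
      · rw [if_neg h']
        have e1 : applyT p i j k (l+1) = p (l+1) := by
          unfold applyT; rw [if_pos (by omega)]
        have e2 : applyT p i j k l = p l := by
          unfold applyT; rw [if_pos (by omega)]
        rw [e1, e2]

private lemma str1_bound (n i j k : ℕ) (p : ℕ → ℤ) (h1 : 1 ≤ i) (h2 : i < j) (h3 : j < k)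
    (h4 : k ≤ n + 1) :
    tBreakpoints n p ≤ tBreakpoints n (applySTR1 p i j k) + 3 := by
  have hk := keyInj n p (applySTR1 p i j k) {i-1, j-1, k-1}
      (fun l => if i ≤ l ∧ l + 1 < j then i+k-2-l
        else if j ≤ l ∧ l + 1 < k then l - (j-i) else l) ?_ ?_ ?_
  · have := card3' (i-1) (j-1) (k-1); omega
  · intro l hl hA
    simp only [Finset.mem_insert, Finset.mem_singleton, not_or] at hA
    split_ifs with h h' <;> omega
  · intro a b ha hA hb hB hab
    simp only [Finset.mem_insert, Finset.mem_singleton, not_or] at hA hB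
    split_ifs at hab <;> omega
  · intro l hl hA
    simp only [Finset.mem_insert, Finset.mem_singleton, not_or] at hA
    by_cases h : i ≤ l ∧ l + 1 < j
    · rw [if_pos h]
      have e1 : applySTR1 p i j k (i+k-2-l+1) = -p l := by
        have hx : i+k-1 - (i+k-2-l+1) = l := by omega
        unfold applySTR1; rw [if_neg (by omega), if_neg (by omega), hx]
      have e2 : applySTR1 p i j k (i+k-2-l) = -p (l+1) := by
        have hx : i+k-1 - (i+k-2-l) = l+1 := by omega
        unfold applySTR1; rw [if_neg (by omega), if_neg (by omega), hx]
      rw [e1, e2]; ring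
    · rw [if_neg h]
      by_cases h' : j ≤ l ∧ l + 1 < k
      · rw [if_pos h']
        have e1 : applySTR1 p i j k (l-(j-i)+1) = p (l+1) := by
          have hx : l-(j-i)+1 + (j-i) = l+1 := by omega
          unfold applySTR1; rw [if_neg (by omega), if_pos (by omega), hx]
        have e2 : applySTR1 p i j k (l-(j-i)) = p l := by
          have hx : l-(j-i) + (j-i) = l := by omega
          unfold applySTR1; rw [if_neg (by omega), if_pos (by omega), hx]
        rw [e1, e2]
      · rw [if_neg h']
        have e1 : applySTR1 p i j k (l+1) = p (l+1) := by
          unfold applySTR1; rw [if_pos (by omega)]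
        have e2 : applySTR1 p i j k l = p l := by
          unfold applySTR1; rw [if_pos (by omega)]
        rw [e1, e2]

private lemma str2_bound (n i j k : ℕ) (p : ℕ → ℤ) (h1 : 1 ≤ i) (h2 : i < j) (h3 : j < k)
    (h4 : k ≤ n + 1) :
    tBreakpoints n p ≤ tBreakpoints n (applySTR2 p i j k) + 3 := by
  have hk := keyInj n p (applySTR2 p i j k) {i-1, j-1, k-1}
      (fun l => if i ≤ l ∧ l + 1 < j then l + (k-j)
        else if j ≤ l ∧ l + 1 < k then i+k-2-l else l) ?_ ?_ ?_
  · have := card3' (i-1) (j-1) (k-1); omega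
  · intro l hl hA
    simp only [Finset.mem_insert, Finset.mem_singleton, not_or] at hA
    split_ifs with h h' <;> omega
  · intro a b ha hA hb hB hab
    simp only [Finset.mem_insert, Finset.mem_singleton, not_or] at hA hB
    split_ifs at hab <;> omega
  · intro l hl hA
    simp only [Finset.mem_insert, Finset.mem_singleton, not_or] at hA
    by_cases h : i ≤ l ∧ l + 1 < j
    · rw [if_pos h]
      have e1 : applySTR2 p i j k (l+(k-j)+1) = p (l+1) := by
        have hx : l+(k-j)+1 - (k-j) = l+1 := by omega
        unfold applySTR2; rw [if_neg (by omega), if_neg (by omega), hx]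
      have e2 : applySTR2 p i j k (l+(k-j)) = p l := by
        have hx : l+(k-j) - (k-j) = l := by omega
        unfold applySTR2; rw [if_neg (by omega), if_neg (by omega), hx]
      rw [e1, e2]
    · rw [if_neg h]
      by_cases h' : j ≤ l ∧ l + 1 < k
      · rw [if_pos h']
        have e1 : applySTR2 p i j k (i+k-2-l+1) = -p l := by
          have hx : i+k-1 - (i+k-2-l+1) = l := by omega
          unfold applySTR2; rw [if_neg (by omega), if_pos (by omega), hx]
        have e2 : applySTR2 p i j k (i+k-2-l) = -p (l+1) := by
          have hx : i+k-1 - (i+k-2-l) = l+1 := by omega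
          unfold applySTR2; rw [if_neg (by omega), if_pos (by omega), hx]
        rw [e1, e2]; ring
      · rw [if_neg h']
        have e1 : applySTR2 p i j k (l+1) = p (l+1) := by
          unfold applySTR2; rw [if_pos (by omega)]
        have e2 : applySTR2 p i j k l = p l := by
          unfold applySTR2; rw [if_pos (by omega)]
        rw [e1, e2]

private lemma srr_bound (n i j k : ℕ) (p : ℕ → ℤ) (h1 : 1 ≤ i) (h2 : i < j) (h3 : j < k)
    (h4 : k ≤ n + 1) :
    tBreakpoints n p ≤ tBreakpoints n (applySRR p i j k) + 3 := by
  have hk := keyInj n p (applySRR p i j k) {i-1, j-1, k-1}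
      (fun l => if i ≤ l ∧ l + 1 < j then i+j-2-l
        else if j ≤ l ∧ l + 1 < k then j+k-2-l else l) ?_ ?_ ?_
  · have := card3' (i-1) (j-1) (k-1); omega
  · intro l hl hA
    simp only [Finset.mem_insert, Finset.mem_singleton, not_or] at hA
    split_ifs with h h' <;> omega
  · intro a b ha hA hb hB hab
    simp only [Finset.mem_insert, Finset.mem_singleton, not_or] at hA hB
    split_ifs at hab <;> omega
  · intro l hl hA
    simp only [Finset.mem_insert, Finset.mem_singleton, not_or] at hA
    by_cases h : i ≤ l ∧ l + 1 < j
    · rw [if_pos h]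
      have e1 : applySRR p i j k (i+j-2-l+1) = -p l := by
        have hx : i+j-1 - (i+j-2-l+1) = l := by omega
        unfold applySRR; rw [if_neg (by omega), if_pos (by omega), hx]
      have e2 : applySRR p i j k (i+j-2-l) = -p (l+1) := by
        have hx : i+j-1 - (i+j-2-l) = l+1 := by omega
        unfold applySRR; rw [if_neg (by omega), if_pos (by omega), hx]
      rw [e1, e2]; ring
    · rw [if_neg h]
      by_cases h' : j ≤ l ∧ l + 1 < k
      · rw [if_pos h']
        have e1 : applySRR p i j k (j+k-2-l+1) = -p l := by
          have hx : j+k-1 - (j+k-2-l+1) = l := by omega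
          unfold applySRR; rw [if_neg (by omega), if_neg (by omega), hx]
        have e2 : applySRR p i j k (j+k-2-l) = -p (l+1) := by
          have hx : j+k-1 - (j+k-2-l) = l+1 := by omega
          unfold applySRR; rw [if_neg (by omega), if_neg (by omega), hx]
        rw [e1, e2]; ring
      · rw [if_neg h']
        have e1 : applySRR p i j k (l+1) = p (l+1) := by
          unfold applySRR; rw [if_pos (by omega)]
        have e2 : applySRR p i j k l = p l := by
          unfold applySRR; rw [if_pos (by omega)]
        rw [e1, e2]

private lemma op_step (n : ℕ) (op : SOp) (hv : op.Valid n) (p : ℕ → ℤ) (w₁ w₂ : ℝ)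
    (hw₁ : 0 < w₁) (hw₂ : 0 < w₂) :
    min (w₁/2) (w₂/3) * (tBreakpoints n p : ℝ) ≤
      op.weight w₁ w₂ + min (w₁/2) (w₂/3) * (tBreakpoints n (op.apply p) : ℝ) := by
  set c := min (w₁/2) (w₂/3) with hc
  have hc0 : 0 ≤ c := le_min (by positivity) (by positivity)
  have hc1 : c ≤ w₁/2 := min_le_left _ _
  have hc2 : c ≤ w₂/3 := min_le_right _ _
  cases op with
  | rev i j =>
    obtain ⟨a1, a2, a3⟩ := hv
    have hb : (tBreakpoints n p : ℝ) ≤ (tBreakpoints n (applySR p i j) : ℝ) + 2 := by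
      exact_mod_cast rev_bound n i j p a1 a2 a3
    have hm := mul_le_mul_of_nonneg_left hb hc0
    rw [mul_add] at hm
    simp only [SOp.weight, SOp.apply]
    linarith
  | transp i j k =>
    obtain ⟨a1, a2, a3, a4⟩ := hv
    have hb : (tBreakpoints n p : ℝ) ≤ (tBreakpoints n (applyT p i j k) : ℝ) + 3 := by
      exact_mod_cast transp_bound n i j k p a1 a2 a3 a4
    have hm := mul_le_mul_of_nonneg_left hb hc0
    rw [mul_add] at hm
    simp only [SOp.weight, SOp.apply]
    linarith
  | transrev1 i j k =>
    obtain ⟨a1, a2, a3, a4⟩ := hv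
    have hb : (tBreakpoints n p : ℝ) ≤ (tBreakpoints n (applySTR1 p i j k) : ℝ) + 3 := by
      exact_mod_cast str1_bound n i j k p a1 a2 a3 a4
    have hm := mul_le_mul_of_nonneg_left hb hc0
    rw [mul_add] at hm
    simp only [SOp.weight, SOp.apply]
    linarith
  | transrev2 i j k =>
    obtain ⟨a1, a2, a3, a4⟩ := hv
    have hb : (tBreakpoints n p : ℝ) ≤ (tBreakpoints n (applySTR2 p i j k) : ℝ) + 3 := by
      exact_mod_cast str2_bound n i j k p a1 a2 a3 a4
    have hm := mul_le_mul_of_nonneg_left hb hc0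
    rw [mul_add] at hm
    simp only [SOp.weight, SOp.apply]
    linarith
  | revrev i j k =>
    obtain ⟨a1, a2, a3, a4⟩ := hv
    have hb : (tBreakpoints n p : ℝ) ≤ (tBreakpoints n (applySRR p i j k) : ℝ) + 3 := by
      exact_mod_cast srr_bound n i j k p a1 a2 a3 a4
    have hm := mul_le_mul_of_nonneg_left hb hc0
    rw [mul_add] at hm
    simp only [SOp.weight, SOp.apply]
    linarith

private lemma main_aux (n : ℕ) (w₁ w₂ : ℝ) (hw₁ : 0 < w₁) (hw₂ : 0 < w₂) (S : List SOp) :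
    ∀ (p : ℕ → ℤ), (∀ op ∈ S, op.Valid n) →
      (∀ i, i ≤ n + 1 → (S.foldl (fun q op => op.apply q) p) i = (i : ℤ)) →
      min (w₁/2) (w₂/3) * (tBreakpoints n p : ℝ) ≤ (S.map (SOp.weight w₁ w₂)).sum := by
  induction S with
  | nil =>
    intro p hv hs
    have hz : tBreakpoints n p = 0 := by
      unfold tBreakpoints
      rw [Finset.card_eq_zero, Finset.filter_eq_empty_iff]
      intro i hi
      simp only [Finset.mem_range] at hi
      have h1 := hs i (by omega)
      have h2 := hs (i+1) (by omega)
      simp only [List.foldl_nil] at h1 h2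
      simp only [ne_eq, not_not, h1, h2]
      push_cast; ring
    simp [hz]
  | cons op S ih =>
    intro p hv hs
    have hv' : ∀ o ∈ S, o.Valid n := fun o ho => hv o (List.mem_cons_of_mem _ ho)
    have hs' : ∀ i, i ≤ n + 1 →
        (S.foldl (fun q op => op.apply q) (op.apply p)) i = (i : ℤ) := by
      intro i hi
      have := hs i hi
      simpa [List.foldl_cons] using this
    have ih' := ih (op.apply p) hv' hs'
    have hstep := op_step n op (hv op List.mem_cons_self) p w₁ w₂ hw₁ hw₂
    simp only [List.map_cons, List.sum_cons]
    linarith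

theorem stmt10 (n : ℕ) (p : ℕ → ℤ) (hp : IsExtSignedPerm n p)
    (w₁ w₂ : ℝ) (hw₁ : 0 < w₁) (hw₂ : 0 < w₂)
    (S : List SOp) (hvalid : ∀ op ∈ S, op.Valid n)
    (hsort : ∀ i, i ≤ n + 1 → (S.foldl (fun q op => op.apply q) p) i = (i : ℤ)) :
    (S.map (SOp.weight w₁ w₂)).sum ≥
      min (w₁ / 2) (w₂ / 3) * (tBreakpoints n p : ℝ) :=
  main_aux n w₁ w₂ hw₁ hw₂ S p hvalid hsort
end

section
/- Define the doubling map on an unsigned permutation π of {1,…,n} by π′ of {1,…,2n} with π′_{2i−1} = 2π_i − 1 and π′_{2i} = 2π_i. Then b(π′) = b_τ(π), where b_τ(π) is the number of transposition breakpoints of π (with extensions π₀=0, π_{n+1}=n+1) and b(π′) is the number of unsigned reversal breakpoints of π′ (with extensions π′₀=0, π′_{2n+1}=2n+1). -/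
/-- Number of unsigned reversal breakpoints of the extended permutation:
pairs `(p i, p (i+1))`, `0 ≤ i ≤ n`, with `|p (i+1) - p i| ≠ 1`. -/
def uBreakpoints (n : ℕ) (p : ℕ → ℤ) : ℕ :=
  ((Finset.range (n+1)).filter (fun i => |p (i+1) - p i| ≠ 1)).card

theorem stmt11 (n : ℕ) (p : ℕ → ℤ) (hp : IsExtPerm n p)
    (q : ℕ → ℤ) (hq0 : q 0 = 0) (hqlast : q (2*n + 1) = 2 * (n : ℤ) + 1)
    (hodd : ∀ i, 1 ≤ i → i ≤ n → q (2*i - 1) = 2 * p i - 1)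
    (heven : ∀ i, 1 ≤ i → i ≤ n → q (2*i) = 2 * p i) :
    uBreakpoints (2*n) q = tBreakpoints n p := by
  obtain ⟨hp0, hplast, hpran, hpinj⟩ := hp
  -- key: diff at even positions
  have key : ∀ i ≤ n, q (2*i + 1) - q (2*i) = 2 * (p (i+1) - p i) - 1 := by
    intro i hi
    rcases Nat.eq_zero_or_pos i with rfl | hi1
    · rcases Nat.eq_zero_or_pos n with rfl | hn
      · simp only [Nat.mul_zero, Nat.zero_add] at hqlast ⊢
        rw [hq0, hqlast]
        have : p 1 = (0 : ℤ) + 1 := hplast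
        rw [hp0, this]; ring
      · have h1 : q (2*1 - 1) = 2 * p 1 - 1 := hodd 1 le_rfl hn
        norm_num at h1
        simp only [Nat.mul_zero, Nat.zero_add]
        rw [hq0, h1, hp0]; ring
    · have he : q (2*i) = 2 * p i := heven i hi1 hi
      rcases eq_or_lt_of_le hi with rfl | hlt
      · rw [he, show 2*i + 1 = 2*i+1 from rfl, hqlast, hplast]; ring
      · have hi1n : i + 1 ≤ n := hlt
        have ho : q (2*(i+1) - 1) = 2 * p (i+1) - 1 := hodd (i+1) (by omega) hi1n
        have : 2*(i+1) - 1 = 2*i + 1 := by omega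
        rw [this] at ho
        rw [he, ho]; ring
  have pne : ∀ i ≤ n, p (i+1) ≠ p i := by
    intro i hi
    rcases Nat.eq_zero_or_pos i with rfl | hi1
    · rcases Nat.eq_zero_or_pos n with rfl | hn
      · rw [hp0, hplast]; norm_num
      · show p 1 ≠ p 0
        rw [hp0]
        have := (hpran 1 le_rfl hn).1
        omega
    · rcases eq_or_lt_of_le hi with rfl | hlt
      · rw [hplast]
        have := (hpran i hi1 le_rfl).2
        omega
      · intro h
        have := hpinj (i+1) i (by omega) hlt hi1 hi h
        omega
  -- the u-predicate at 2i equals the t-predicate at i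
  have equiv : ∀ i ≤ n, (|q (2*i + 1) - q (2*i)| ≠ 1 ↔ p (i+1) - p i ≠ 1) := by
    intro i hi
    rw [key i hi]
    have hne := pne i hi
    constructor
    · intro h h1
      apply h
      rw [h1]; norm_num
    · intro h habs
      rcases abs_eq (by norm_num : (0:ℤ) ≤ 1) |>.mp habs with h2 | h2 <;> omega
  apply Finset.card_bij (fun j _ => j / 2)
  · intro j hj
    simp only [Finset.mem_filter, Finset.mem_range] at hj ⊢
    obtain ⟨hjr, hjb⟩ := hj
    -- j must be even
    have hje : j % 2 = 0 := by
      by_contra hodd'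
      have : j % 2 = 1 := by omega
      obtain ⟨i, hi⟩ : ∃ i, j = 2*i - 1 ∧ 1 ≤ i ∧ i ≤ n := ⟨(j+1)/2, by omega⟩
      obtain ⟨hji, hi1, hin⟩ := hi
      apply hjb
      have e1 : q j = 2 * p i - 1 := by rw [hji]; exact hodd i hi1 hin
      have e2 : q (j+1) = 2 * p i := by
        rw [show j + 1 = 2*i from by omega]; exact heven i hi1 hin
      rw [e1, e2]; norm_num
    obtain ⟨i, rfl⟩ : ∃ i, j = 2*i := ⟨j/2, by omega⟩
    have hin : i ≤ n := by omega
    have hdiv : 2*i/2 = i := by omega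
    rw [hdiv]
    exact ⟨by omega, (equiv i hin).mp hjb⟩
  · intro a ha b hb hab
    simp only [Finset.mem_filter, Finset.mem_range] at ha hb
    -- both a, b even (as above); reprove evenness
    have hae : a % 2 = 0 := by
      by_contra h
      have : a % 2 = 1 := by omega
      obtain ⟨i, hji, hi1, hin⟩ : ∃ i, a = 2*i - 1 ∧ 1 ≤ i ∧ i ≤ n := ⟨(a+1)/2, by omega⟩
      exact ha.2 (by rw [hji, show 2*i-1+1 = 2*i from by omega, hodd i hi1 hin, heven i hi1 hin]; norm_num)
    have hbe : b % 2 = 0 := by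
      by_contra h
      have : b % 2 = 1 := by omega
      obtain ⟨i, hji, hi1, hin⟩ : ∃ i, b = 2*i - 1 ∧ 1 ≤ i ∧ i ≤ n := ⟨(b+1)/2, by omega⟩
      exact hb.2 (by rw [hji, show 2*i-1+1 = 2*i from by omega, hodd i hi1 hin, heven i hi1 hin]; norm_num)
    omega
  · intro i hi
    simp only [Finset.mem_filter, Finset.mem_range] at hi
    obtain ⟨hir, hib⟩ := hi
    have hin : i ≤ n := by omega
    refine ⟨2*i, ?_, by omega⟩
    simp only [Finset.mem_filter, Finset.mem_range]
    exact ⟨by omega, (equiv i hin).mpr hib⟩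
end

section
/- For any unsigned permutation π of {1,…,n} with π₁ = 1 and π_n = n, and any prefix, suffix, or complete transposition τ, the number of transposition fragmentation breakpoints removed by τ is strictly less than the number of fragmentations caused by τ (a prefix or suffix transposition causes 2 fragmentations; a complete transposition causes 1). -/
/-- Unsigned permutation of `{1,…,n}` (no extension): `p` maps `{1,…,n}`
bijectively onto `{1,…,n}`. -/
def IsPerm (n : ℕ) (p : ℕ → ℤ) : Prop :=
  (∀ i, 1 ≤ i → i ≤ n → 1 ≤ p i ∧ p i ≤ (n : ℤ)) ∧
  (∀ i j, 1 ≤ i → i ≤ n → 1 ≤ j → j ≤ n → p i = p j → i = j)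

/-- Number of transposition (= signed reversal) fragmentation breakpoints:
pairs `(p i, p (i+1))`, `1 ≤ i < n`, with `p (i+1) - p i ≠ 1` (no extension). -/
def fbT (n : ℕ) (p : ℕ → ℤ) : ℕ :=
  ((Finset.Ico 1 n).filter (fun i => p (i+1) - p i ≠ 1)).card

lemma applyT_low (p : ℕ → ℤ) {i j k l : ℕ} (h : l < i ∨ k ≤ l) :
    applyT p i j k l = p l := by
  simp only [applyT, if_pos h]

lemma applyT_mid1 (p : ℕ → ℤ) {i j k l : ℕ} (hij : i < j) (hjk : j < k)
    (h1 : i ≤ l) (h2 : l < i + (k - j)) :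
    applyT p i j k l = p (l + (j - i)) := by
  have hnot : ¬ (l < i ∨ k ≤ l) := by omega
  simp only [applyT, if_neg hnot, if_pos h2]

lemma applyT_mid2 (p : ℕ → ℤ) {i j k l : ℕ} (hij : i < j) (hjk : j < k)
    (h1 : i + (k - j) ≤ l) (h2 : l < k) :
    applyT p i j k l = p (l - (k - j)) := by
  have hnot : ¬ (l < i ∨ k ≤ l) := by omega
  simp only [applyT, if_neg hnot, if_neg (by omega : ¬ l < i + (k - j))]

theorem stmt12 (n : ℕ) (p : ℕ → ℤ) (hp : IsPerm n p)
    (h1 : p 1 = 1) (hn : p n = (n : ℤ))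
    (i j k : ℕ) (hi : 1 ≤ i) (hij : i < j) (hjk : j < k) (hk : k ≤ n + 1)
    (hps : i = 1 ∨ k = n + 1) :
    (fbT n p : ℤ) - (fbT n (applyT p i j k) : ℤ) <
      (if 1 < i then 1 else 0) + 1 + (if k < n + 1 then 1 else 0) := by
  classical
  obtain ⟨hrange, hinj⟩ := hp
  have hn2 : 2 ≤ n := by omega
  set q := applyT p i j k with hqdef
  set S : Finset ℕ := {i - 1, j - 1, k - 1} with hS
  set Sq : Finset ℕ := {i - 1, i + (k - j) - 1, k - 1} with hSq
  set A : Finset ℕ :=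
    (Finset.Ico 1 n \ S).filter (fun l => p (l + 1) - p l ≠ 1) with hA
  set B : Finset ℕ :=
    (Finset.Ico 1 n \ Sq).filter (fun l => q (l + 1) - q l ≠ 1) with hB
  -- Step 1 : fbT n p ≤ A.card + (Ico ∩ S).card
  have step1 : fbT n p ≤ A.card + ((Finset.Ico 1 n) ∩ S).card := by
    have hsub : (Finset.Ico 1 n).filter (fun l => p (l + 1) - p l ≠ 1)
        ⊆ A ∪ ((Finset.Ico 1 n) ∩ S) := by
      intro x hx
      rw [Finset.mem_filter] at hx
      by_cases hxS : x ∈ S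
      · exact Finset.mem_union_right _ (Finset.mem_inter.mpr ⟨hx.1, hxS⟩)
      · exact Finset.mem_union_left _
          (Finset.mem_filter.mpr ⟨Finset.mem_sdiff.mpr ⟨hx.1, hxS⟩, hx.2⟩)
    exact le_trans (Finset.card_le_card hsub) (Finset.card_union_le _ _)
  -- crossing position
  have hcmem : i + (k - j) - 1 ∈ Finset.Ico 1 n := by
    rw [Finset.mem_Ico]; omega
  have hqc : q (i + (k - j) - 1) = p (k - 1) := by
    rw [hqdef, applyT_mid1 p hij hjk (by omega) (by omega)]
    congr 1; omega
  have hqc1 : q (i + (k - j) - 1 + 1) = p i := by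
    rw [hqdef, applyT_mid2 p hij hjk (by omega) (by omega)]
    congr 1; omega
  have hbpc : q (i + (k - j) - 1 + 1) - q (i + (k - j) - 1) ≠ 1 := by
    rw [hqc, hqc1]
    rcases hps with h | h
    · subst h
      rw [h1]
      have hk1 := (hrange (k - 1) (by omega) (by omega)).1
      intro hcon; linarith
    · have hkn : k - 1 = n := by omega
      rw [hkn, hn]
      have hpi := (hrange i hi (by omega)).2
      intro hcon; linarith
  -- Step 2 : B.card + 1 ≤ fbT n q
  have step2 : B.card + 1 ≤ fbT n q := by
    have hnotmem : i + (k - j) - 1 ∉ B := by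
      rw [hB, Finset.mem_filter, Finset.mem_sdiff]
      intro hcon
      exact hcon.1.2 (by rw [hSq]; simp)
    have hsub : insert (i + (k - j) - 1) B ⊆
        (Finset.Ico 1 n).filter (fun l => q (l + 1) - q l ≠ 1) := by
      intro x hx
      rcases Finset.mem_insert.mp hx with rfl | hx
      · exact Finset.mem_filter.mpr ⟨hcmem, hbpc⟩
      · rw [hB, Finset.mem_filter, Finset.mem_sdiff] at hx
        exact Finset.mem_filter.mpr ⟨hx.1.1, hx.2⟩
    calc B.card + 1 = (insert (i + (k - j) - 1) B).card :=
          (Finset.card_insert_of_notMem hnotmem).symm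
      _ ≤ _ := Finset.card_le_card hsub
  -- Step AB : A.card ≤ B.card via explicit injection
  have stepAB : A.card ≤ B.card := by
    apply Finset.card_le_card_of_injOn
      (fun l => if l < i then l else if l < j then l + (k - j)
        else if l < k then l - (j - i) else l)
    · intro l hl
      simp only [Finset.mem_coe, hA, Finset.mem_filter, Finset.mem_sdiff, Finset.mem_Ico] at hl
      obtain ⟨⟨⟨hl1, hln⟩, hlS⟩, hlbp⟩ := hl
      rw [hS] at hlS
      simp only [Finset.mem_insert, Finset.mem_singleton] at hlS
      push_neg at hlS
      obtain ⟨hli, hlj, hlk⟩ := hlS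
      rw [Finset.mem_coe, hB, Finset.mem_filter, Finset.mem_sdiff, Finset.mem_Ico]
      by_cases c1 : l < i
      · simp only [if_pos c1]
        refine ⟨⟨⟨by omega, by omega⟩, ?_⟩, ?_⟩
        · rw [hSq]; simp only [Finset.mem_insert, Finset.mem_singleton]; omega
        · rw [hqdef, applyT_low p (Or.inl (show l + 1 < i by omega)),
            applyT_low p (Or.inl (show l < i by omega))]
          exact hlbp
      · by_cases c2 : l < j
        · simp only [if_neg c1, if_pos c2]
          refine ⟨⟨⟨by omega, by omega⟩, ?_⟩, ?_⟩
          · rw [hSq]; simp only [Finset.mem_insert, Finset.mem_singleton]; omega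
          · rw [hqdef, applyT_mid2 p hij hjk (by omega) (by omega),
              applyT_mid2 p hij hjk (by omega) (by omega)]
            have e1 : l + (k - j) + 1 - (k - j) = l + 1 := by omega
            have e2 : l + (k - j) - (k - j) = l := by omega
            rw [e1, e2]; exact hlbp
        · by_cases c3 : l < k
          · simp only [if_neg c1, if_neg c2, if_pos c3]
            refine ⟨⟨⟨by omega, by omega⟩, ?_⟩, ?_⟩
            · rw [hSq]; simp only [Finset.mem_insert, Finset.mem_singleton]; omega
            · rw [hqdef, applyT_mid1 p hij hjk (by omega) (by omega),
                applyT_mid1 p hij hjk (by omega) (by omega)]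
              have e1 : l - (j - i) + 1 + (j - i) = l + 1 := by omega
              have e2 : l - (j - i) + (j - i) = l := by omega
              rw [e1, e2]; exact hlbp
          · simp only [if_neg c1, if_neg c2, if_neg c3]
            refine ⟨⟨⟨by omega, by omega⟩, ?_⟩, ?_⟩
            · rw [hSq]; simp only [Finset.mem_insert, Finset.mem_singleton]; omega
            · rw [hqdef, applyT_low p (Or.inr (by omega : k ≤ l)),
                applyT_low p (Or.inr (by omega : k ≤ l + 1))]
              exact hlbp
    · intro a ha b hb hab
      simp only [hA, Finset.coe_filter, Set.mem_setOf_eq, Finset.mem_sdiff,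
        Finset.mem_Ico, hS, Finset.mem_insert, Finset.mem_singleton] at ha hb
      have ha' := ha.1
      have hb' := hb.1
      simp only at hab
      split_ifs at hab <;> omega
  -- Step 3 : bound on (Ico ∩ S).card
  have step3 : ((Finset.Ico 1 n) ∩ S).card ≤
      (if 1 < i then 1 else 0) + 1 + (if k < n + 1 then 1 else 0) := by
    have hsub : (Finset.Ico 1 n) ∩ S ⊆
        ((if 1 < i then ({i - 1} : Finset ℕ) else ∅) ∪ {j - 1})
          ∪ (if k < n + 1 then ({k - 1} : Finset ℕ) else ∅) := by
      intro x hx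
      rw [Finset.mem_inter, Finset.mem_Ico, hS] at hx
      simp only [Finset.mem_insert, Finset.mem_singleton] at hx
      split_ifs with hI hK hK <;>
        simp only [Finset.mem_union, Finset.mem_singleton,
          Finset.notMem_empty] <;> omega
    refine le_trans (Finset.card_le_card hsub) ?_
    refine le_trans (Finset.card_union_le _ _) ?_
    refine add_le_add (le_trans (Finset.card_union_le _ _) (add_le_add ?_ ?_)) ?_
    · split_ifs <;> simp
    · simp
    · split_ifs <;> simp
  have key : (fbT n p : ℤ) - (fbT n q : ℤ) ≤
      (((Finset.Ico 1 n) ∩ S).card : ℤ) - 1 := by omega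
  split_ifs at step3 ⊢ <;> omega
end

section
/- For any permutation π of {1,…,n} and any transposition τ, the number of transposition fragmentation breakpoints removed by τ is at most the number of fragmentations caused by τ: complete transpositions remove at most 1 fragmentation breakpoint, prefix and suffix transpositions remove at most 2, and all other transpositions remove at most 3. -/
/-!
The transposition moves each uncut pair of adjacent entries `(π_l, π_{l+1})` as a whole to a new
pair of adjacent positions. Hence every breakpoint of `π` at a pair that `τ(i,j,k)` does not
separate is carried injectively to a breakpoint of `π·τ`, and only the breakpoints at the (at most
three) separated pairs can disappear.
-/

open Finset

/-- The position to which the transposition `τ(i,j,k)` moves the entry at position `l`. -/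
def posT (i j k l : ℕ) : ℕ :=
  if l < i ∨ k ≤ l then l
  else if l < j then l + (k - j)
  else l - (j - i)

section posT

variable {i j k : ℕ}

theorem applyT_posT (p : ℕ → ℤ) (hij : i ≤ j) (hjk : j ≤ k) (l : ℕ) :
    applyT p i j k (posT i j k l) = p l := by
  unfold posT applyT
  split_ifs <;> first | rfl | (congr 1; omega)

theorem posT_injective (hij : i ≤ j) (hjk : j ≤ k) : Function.Injective (posT i j k) := by
  intro l m h
  unfold posT at h
  split_ifs at h <;> omega

theorem posT_succ {l : ℕ} (hi : l + 1 ≠ i) (hj : l + 1 ≠ j) (hk : l + 1 ≠ k) :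
    posT i j k (l + 1) = posT i j k l + 1 := by
  unfold posT
  split_ifs <;> omega

theorem one_le_posT (hi : 1 ≤ i) {l : ℕ} (hl : 1 ≤ l) : 1 ≤ posT i j k l := by
  unfold posT
  split_ifs <;> omega

theorem posT_le {n : ℕ} (hk : k ≤ n + 1) {l : ℕ} (hl : l ≤ n) : posT i j k l ≤ n := by
  unfold posT
  split_ifs <;> omega

end posT

/-- The pairs of positions `(l, l + 1)` separated by `τ(i,j,k)`. -/
def cutsT (n i j k : ℕ) : Finset ℕ :=
  (Ico 1 n).filter fun l => l + 1 = i ∨ l + 1 = j ∨ l + 1 = k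

theorem card_cutsT_le (n i j k : ℕ) :
    #(cutsT n i j k) ≤ (if 1 < i then 1 else 0) + 1 + (if k < n + 1 then 1 else 0) := by
  split_ifs <;>
    [refine (card_le_card (t := {i - 1, j - 1, k - 1}) ?_).trans card_le_three;
     refine (card_le_card (t := {i - 1, j - 1}) ?_).trans card_le_two;
     refine (card_le_card (t := {j - 1, k - 1}) ?_).trans card_le_two;
     refine (card_le_card (t := {j - 1}) ?_).trans (card_singleton _).le] <;>
  · intro l hl
    simp only [cutsT, mem_filter, mem_Ico, mem_insert, mem_singleton] at hl ⊢
    omega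

theorem card_uncut_breakpoints_le (n : ℕ) (p : ℕ → ℤ) {i j k : ℕ} (hi : 1 ≤ i) (hij : i < j)
    (hjk : j < k) (hk : k ≤ n + 1) :
    #((Ico 1 n).filter fun l => p (l + 1) - p l ≠ 1 ∧ l ∉ cutsT n i j k) ≤
      fbT n (applyT p i j k) := by
  refine card_le_card_of_injOn (posT i j k) (fun l hl => ?_)
    ((posT_injective hij.le hjk.le).injOn)
  simp only [cutsT, mem_coe, mem_filter, mem_Ico, not_and, not_or] at hl ⊢
  obtain ⟨⟨hl1, hln⟩, hbp, hcut⟩ := hl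
  obtain ⟨hci, hcj, hck⟩ := hcut ⟨hl1, hln⟩
  have hsucc := posT_succ hci hcj hck
  refine ⟨⟨one_le_posT hi hl1, ?_⟩, ?_⟩
  · have := posT_le (i := i) (j := j) hk (show l + 1 ≤ n by omega)
    omega
  · rwa [← hsucc, applyT_posT p hij.le hjk.le, applyT_posT p hij.le hjk.le]

theorem stmt14_general (n : ℕ) (p : ℕ → ℤ)
    (i j k : ℕ) (hi : 1 ≤ i) (hij : i < j) (hjk : j < k) (hk : k ≤ n + 1) :
    (fbT n p : ℤ) - (fbT n (applyT p i j k) : ℤ) ≤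
      (if 1 < i then 1 else 0) + 1 + (if k < n + 1 then 1 else 0) := by
  set S := (Ico 1 n).filter fun l => p (l + 1) - p l ≠ 1
  have hsplit : #(S.filter (· ∈ cutsT n i j k)) + #(S.filter (· ∉ cutsT n i j k)) = fbT n p :=
    card_filter_add_card_filter_not _
  have hcut : #(S.filter (· ∈ cutsT n i j k)) ≤ #(cutsT n i j k) :=
    card_le_card fun l hl => (mem_filter.mp hl).2
  have huncut : #(S.filter (· ∉ cutsT n i j k)) ≤ fbT n (applyT p i j k) := by
    rw [filter_filter]
    exact card_uncut_breakpoints_le n p hi hij hjk hk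
  have hbound := card_cutsT_le n i j k
  split_ifs at hbound ⊢ <;> push_cast <;> omega

theorem stmt14 (n : ℕ) (p : ℕ → ℤ) (hp : IsPerm n p)
    (i j k : ℕ) (hi : 1 ≤ i) (hij : i < j) (hjk : j < k) (hk : k ≤ n + 1) :
    (fbT n p : ℤ) - (fbT n (applyT p i j k) : ℤ) ≤
      (if 1 < i then 1 else 0) + 1 + (if k < n + 1 then 1 else 0) :=
  stmt14_general n p i j k hi hij hjk hk
end

section
/- If a sequence S of reversals and transpositions contains more than one complete reversal, then there exists a sequence S′ with the same overall effect on every permutation (the composition of the operations is equal) such that S′ contains at most one complete reversal, and if S′ contains a complete reversal then it is the last operation of S′. -/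
/-- An operation on signed permutations: a signed reversal or a transposition. -/
inductive ROp where
  | rev (i j : ℕ)
  | transp (i j k : ℕ)

/-- Validity of the indices of an operation on a permutation of size `n`. -/
def ROp.Valid (n : ℕ) : ROp → Prop
  | .rev i j => 1 ≤ i ∧ i ≤ j ∧ j ≤ n
  | .transp i j k => 1 ≤ i ∧ i < j ∧ j < k ∧ k ≤ n + 1

/-- Applying an operation. -/
def ROp.apply : ROp → (ℕ → ℤ) → (ℕ → ℤ)
  | .rev i j, p => applySR p i j
  | .transp i j k, p => applyT p i j k

/-- Whether an operation is the complete reversal ρ̄(1,n). -/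
def ROp.isComplete (n : ℕ) : ROp → Bool
  | .rev i j => i = 1 ∧ j = n
  | .transp _ _ _ => false


/-!
Conjugating by the complete reversal `ρ̄(1,n)` maps an operation to its mirror image
`ρ̄(i,j) ↦ ρ̄(n+1-j, n+1-i)`, `τ(i,j,k) ↦ τ(n+2-k, n+2-j, n+2-i)`, which is valid and complete
exactly when the original one is. So a complete reversal can be pushed past every later operation,
mirroring it, to the end of the sequence, where two complete reversals cancel since `ρ̄(1,n)` is an
involution. Processing the sequence one operation at a time keeps it of the form `T ρ̄(1,n)^b`
with no complete reversal in `T`.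
-/

namespace ROp

def applyList (S : List ROp) (p : ℕ → ℤ) : ℕ → ℤ :=
  S.foldl (fun q op => op.apply q) p

lemma applyList_concat (S : List ROp) (op : ROp) (p : ℕ → ℤ) :
    applyList (S ++ [op]) p = op.apply (applyList S p) := by
  simp [applyList]

def mirror (n : ℕ) : ROp → ROp
  | .rev i j => .rev (n + 1 - j) (n + 1 - i)
  | .transp i j k => .transp (n + 2 - k) (n + 2 - j) (n + 2 - i)

lemma isComplete_eq_true_iff {n : ℕ} {op : ROp} : op.isComplete n = true ↔ op = .rev 1 n := by
  cases op <;> simp [isComplete]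

lemma Valid.mirror {n : ℕ} {op : ROp} (h : op.Valid n) : (op.mirror n).Valid n := by
  cases op <;> simp only [ROp.mirror, Valid] at * <;> omega

lemma Valid.isComplete_mirror {n : ℕ} {op : ROp} (h : op.Valid n) :
    (op.mirror n).isComplete n = op.isComplete n := by
  cases op with
  | rev i j =>
    simp only [Valid] at h
    simp only [ROp.mirror, isComplete, decide_eq_decide]
    omega
  | transp i j k => rfl

lemma applySR_one_applySR_one (n : ℕ) (p : ℕ → ℤ) : applySR (applySR p 1 n) 1 n = p := by
  funext l
  simp only [applySR]
  split_ifs <;> first | rfl | (exfalso; omega) | (rw [neg_neg]; congr 1; omega)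

lemma Valid.apply_applySR_one {n : ℕ} {op : ROp} (h : op.Valid n) (p : ℕ → ℤ) :
    op.apply (applySR p 1 n) = applySR ((op.mirror n).apply p) 1 n := by
  funext l
  cases op <;> simp only [Valid] at h <;>
    simp only [apply, ROp.mirror, applySR, applyT] <;>
    split_ifs <;> (try simp only [neg_neg, neg_inj]) <;>
    first | rfl | (exfalso; omega) | (congr 1; omega)

def withFinalComplete (n : ℕ) (T : List ROp) : Bool → List ROp
  | false => T
  | true => T ++ [.rev 1 n]

lemma forall_mem_withFinalComplete {P : ROp → Prop} {n : ℕ} {T : List ROp} {b : Bool} :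
    (∀ op ∈ withFinalComplete n T b, P op) ↔ (∀ op ∈ T, P op) ∧ (b = true → P (.rev 1 n)) := by
  cases b <;> simp [withFinalComplete, or_imp, forall_and]

lemma exists_withFinalComplete {n : ℕ} (S : List ROp) (hS : ∀ op ∈ S, op.Valid n) :
    ∃ (T : List ROp) (b : Bool), (∀ op ∈ T, op.isComplete n = false) ∧
      (∀ op ∈ withFinalComplete n T b, op.Valid n) ∧
      ∀ p, applyList (withFinalComplete n T b) p = applyList S p := by
  induction S using List.reverseRecOn with
  | nil => exact ⟨[], false, by simp, by simp [withFinalComplete], fun _ => rfl⟩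
  | append_singleton S op ih =>
    rw [List.forall_mem_append, List.forall_mem_singleton] at hS
    obtain ⟨T, b, hT, hvalid, heq⟩ := ih hS.1
    rw [forall_mem_withFinalComplete] at hvalid
    simp_rw [applyList_concat, ← heq]
    by_cases hc : op.isComplete n = true
    · obtain rfl := isComplete_eq_true_iff.mp hc
      refine ⟨T, !b, hT, forall_mem_withFinalComplete.mpr ⟨hvalid.1, fun _ => hS.2⟩, fun p => ?_⟩
      cases b
      · exact applyList_concat T _ p
      · simp only [withFinalComplete, Bool.not_true, applyList_concat]
        exact (applySR_one_applySR_one n _).symm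
    · rw [Bool.not_eq_true] at hc
      cases b
      · refine ⟨T ++ [op], false, ?_, ?_, fun p => applyList_concat T op p⟩ <;>
          simp only [withFinalComplete, List.forall_mem_append, List.forall_mem_singleton]
        exacts [⟨hT, hc⟩, ⟨hvalid.1, hS.2⟩]
      · refine ⟨T ++ [op.mirror n], true, ?_, ?_, fun p => ?_⟩ <;>
          simp only [withFinalComplete, List.forall_mem_append, List.forall_mem_singleton,
            applyList_concat]
        exacts [⟨hT, hS.2.isComplete_mirror.trans hc⟩, ⟨⟨hvalid.1, hS.2.mirror⟩, hvalid.2 rfl⟩,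
          (hS.2.apply_applySR_one _).symm]

lemma length_filter_isComplete_withFinalComplete_le_one {n : ℕ} {T : List ROp}
    (hT : ∀ op ∈ T, op.isComplete n = false) (b : Bool) :
    ((withFinalComplete n T b).filter (isComplete n)).length ≤ 1 := by
  have hnil : T.filter (isComplete n) = [] := List.filter_eq_nil_iff.mpr (by simp_all)
  cases b <;> simp [withFinalComplete, hnil, isComplete]

lemma isComplete_eq_false_of_mem_dropLast_withFinalComplete {n : ℕ} {T : List ROp}
    (hT : ∀ op ∈ T, op.isComplete n = false) (b : Bool) :
    ∀ op ∈ (withFinalComplete n T b).dropLast, op.isComplete n = false := by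
  cases b
  · exact fun op hop => hT op (List.dropLast_subset T hop)
  · simpa [withFinalComplete] using hT

end ROp

theorem stmt19_general (n : ℕ) (S : List ROp) (hvalid : ∀ op ∈ S, op.Valid n) :
    ∃ S' : List ROp,
      (∀ op ∈ S', op.Valid n) ∧
      (∀ p : ℕ → ℤ, S'.foldl (fun q op => op.apply q) p =
        S.foldl (fun q op => op.apply q) p) ∧
      (S'.filter (ROp.isComplete n)).length ≤ 1 ∧
      (∀ op ∈ S'.dropLast, ¬ (ROp.isComplete n op = true)) := by
  obtain ⟨T, b, hT, hTvalid, heq⟩ := ROp.exists_withFinalComplete S hvalid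
  exact ⟨ROp.withFinalComplete n T b, hTvalid, heq,
    ROp.length_filter_isComplete_withFinalComplete_le_one hT b, fun op hop =>
    Bool.eq_false_iff.mp (ROp.isComplete_eq_false_of_mem_dropLast_withFinalComplete hT b op hop)⟩

theorem stmt19 (n : ℕ) (S : List ROp) (hvalid : ∀ op ∈ S, op.Valid n)
    (hmany : 1 < (S.filter (ROp.isComplete n)).length) :
    ∃ S' : List ROp,
      (∀ op ∈ S', op.Valid n) ∧
      (∀ p : ℕ → ℤ, S'.foldl (fun q op => op.apply q) p =
        S.foldl (fun q op => op.apply q) p) ∧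
      (S'.filter (ROp.isComplete n)).length ≤ 1 ∧
      (∀ op ∈ S'.dropLast, ¬ (ROp.isComplete n op = true)) :=
  stmt19_general n S hvalid
end
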